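/- arXiv:2110.03580 — 2 statements merged into one kernel-verified Lean document; each statement's English description precedes it below -/
import Mathlib

section
/- Let β₁, β₂, β₃, θ, L_w ≥ 0 with β₃ ≥ 10·√(β₁ · L_w), let p ∈ [0,1] and m ≥ 0, and define R(n, θ) = √(β₁ · n) + β₂·θ + β₃ for n ≥ 0. If N is a real number satisfying (3/4)·p·m − 21·L_w ≤ N and N ≤ (5/4)·p·m + 21·L_w and N ≥ 0, then (1/2)·R(p·m, θ) ≤ R(N, θ) ≤ (3/2)·R(p·m, θ). -/
/-!
With `s = √(β₁ p m)`, `t = √(β₁ N)` and `u = √(β₁ L_w)`, the two-sided bound on `N` and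
subadditivity of `√` give `t ≤ (3/2) s + 5 u` and `s ≤ 2 t + 6 u`, while `10 u ≤ β₃`.
So the fluctuation of the `√` term is absorbed by half of the constant `β₃`.
-/

open Real

lemma le_sq_sqrt_self (x : ℝ) : x ≤ √x ^ 2 := by
  rcases le_total 0 x with hx | hx
  · rw [sq_sqrt hx]
  · exact hx.trans (sq_nonneg _)

lemma sqrt_add_le_sqrt_add_sqrt (x y : ℝ) : √(x + y) ≤ √x + √y := by
  rw [sqrt_le_iff]
  refine ⟨by positivity, ?_⟩
  nlinarith [sqrt_nonneg x, sqrt_nonneg y, le_sq_sqrt_self x, le_sq_sqrt_self y]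

lemma sqrt_le_of_le_mul_add_mul {x y z a b : ℝ} (ha : 0 ≤ a) (hb : 0 ≤ b)
    (h : x ≤ a * y + b * z) : √x ≤ √a * √y + √b * √z := by
  rw [← sqrt_mul ha, ← sqrt_mul hb]
  exact (sqrt_le_sqrt h).trans (sqrt_add_le_sqrt_add_sqrt _ _)

lemma sqrt_le_of_le_mul_add_mul_of_sqrt_le {x y z a b c d : ℝ} (ha : 0 ≤ a) (hb : 0 ≤ b)
    (hac : √a ≤ c) (hbd : √b ≤ d) (h : x ≤ a * y + b * z) : √x ≤ c * √y + d * √z :=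
  calc √x ≤ √a * √y + √b * √z := sqrt_le_of_le_mul_add_mul ha hb h
    _ ≤ c * √y + d * √z := by gcongr

theorem stmt_10_general (β₁ β₂ β₃ θ Lw p m N : ℝ)
    (hβ₁ : 0 ≤ β₁) (hβ₂ : 0 ≤ β₂) (hθ : 0 ≤ θ)
    (hβ₃' : 10 * Real.sqrt (β₁ * Lw) ≤ β₃)
    (hN1 : (3 / 4) * p * m - 21 * Lw ≤ N)
    (hN2 : N ≤ (5 / 4) * p * m + 21 * Lw) :
    (1 / 2) * (Real.sqrt (β₁ * (p * m)) + β₂ * θ + β₃) ≤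
        Real.sqrt (β₁ * N) + β₂ * θ + β₃ ∧
      Real.sqrt (β₁ * N) + β₂ * θ + β₃ ≤
        (3 / 2) * (Real.sqrt (β₁ * (p * m)) + β₂ * θ + β₃) := by
  have hupper : √(β₁ * N) ≤ 3 / 2 * √(β₁ * (p * m)) + 5 * √(β₁ * Lw) := by
    refine sqrt_le_of_le_mul_add_mul_of_sqrt_le (a := 5 / 4) (b := 21) (by norm_num)
      (by norm_num) (by rw [sqrt_le_left] <;> norm_num) (by rw [sqrt_le_left] <;> norm_num) ?_
    nlinarith [mul_le_mul_of_nonneg_left hN2 hβ₁]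
  have hlower : √(β₁ * (p * m)) ≤ 2 * √(β₁ * N) + 6 * √(β₁ * Lw) := by
    refine sqrt_le_of_le_mul_add_mul_of_sqrt_le (a := 4 / 3) (b := 28) (by norm_num)
      (by norm_num) (by rw [sqrt_le_left] <;> norm_num) (by rw [sqrt_le_left] <;> norm_num) ?_
    nlinarith [mul_le_mul_of_nonneg_left hN1 hβ₁]
  have hu : 0 ≤ √(β₁ * Lw) := sqrt_nonneg _
  have hβ₂θ : 0 ≤ β₂ * θ := mul_nonneg hβ₂ hθ
  constructor <;> linarith

theorem stmt_10 (β₁ β₂ β₃ θ Lw p m N : ℝ)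
    (hβ₁ : 0 ≤ β₁) (hβ₂ : 0 ≤ β₂) (hβ₃ : 0 ≤ β₃) (hθ : 0 ≤ θ) (hLw : 0 ≤ Lw)
    (hβ₃' : 10 * Real.sqrt (β₁ * Lw) ≤ β₃)
    (hp0 : 0 ≤ p) (hp1 : p ≤ 1) (hm : 0 ≤ m)
    (hN1 : (3 / 4) * p * m - 21 * Lw ≤ N)
    (hN2 : N ≤ (5 / 4) * p * m + 21 * Lw) (hN0 : 0 ≤ N) :
    (1 / 2) * (Real.sqrt (β₁ * (p * m)) + β₂ * θ + β₃) ≤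
        Real.sqrt (β₁ * N) + β₂ * θ + β₃ ∧
      Real.sqrt (β₁ * N) + β₂ * θ + β₃ ≤
        (3 / 2) * (Real.sqrt (β₁ * (p * m)) + β₂ * θ + β₃) :=
  stmt_10_general β₁ β₂ β₃ θ Lw p m N hβ₁ hβ₂ hθ hβ₃' hN1 hN2
end

section
/- Let α ∈ [0,1], t ≥ 0, L ≥ 0, c_max ≥ 0 be reals, and let c_1, ..., c_n be reals with 0 ≤ c_τ ≤ c_max and n ≤ t. Suppose N and S are reals with 0 ≤ N ≤ (5/4)·α·t + 21·L and 0 ≤ S ≤ (5/4)·α·∑_τ c_τ² + 21·c_max²·L. Then √(N·S) ≤ (5/4)·α·√(t·∑_τ c_τ²) + 8·c_max·√(α·t·L) + 21·c_max·L. -/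
open Finset

lemma sum_sq_le_card_mul_sq {ι : Type*} [Fintype ι] {c : ι → ℝ} {K : ℝ}
    (hc0 : ∀ i, 0 ≤ c i) (hcK : ∀ i, c i ≤ K) :
    ∑ i, c i ^ 2 ≤ Fintype.card ι * K ^ 2 := by
  simpa [nsmul_eq_mul] using
    sum_le_card_nsmul univ (fun i ↦ c i ^ 2) (K ^ 2)
      fun i _ ↦ pow_le_pow_left₀ (hc0 i) (hcK i) 2

/-- The cross terms `a b (K² t + s)` are at most `2 a b K² t`, which the middle term absorbs. -/
lemma sqrt_mul_add_le {a b s t K : ℝ} (ha : 0 ≤ a) (hb : 0 ≤ b) (ht : 0 ≤ t) (hK : 0 ≤ K)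
    (hs0 : 0 ≤ s) (hs : s ≤ K ^ 2 * t) :
    √((a * t + b) * (a * s + K ^ 2 * b)) ≤ a * √(t * s) + K * √(2 * a * b * t) + K * b := by
  have hp := Real.sq_sqrt (mul_nonneg ht hs0)
  have hq := Real.sq_sqrt (by positivity : 0 ≤ 2 * a * b * t)
  set p := √(t * s)
  set q := √(2 * a * b * t)
  have hp0 : 0 ≤ p := Real.sqrt_nonneg _
  have hq0 : 0 ≤ q := Real.sqrt_nonneg _
  refine Real.sqrt_le_iff.mpr ⟨by positivity, ?_⟩
  calc (a * t + b) * (a * s + K ^ 2 * b)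
      = a ^ 2 * (t * s) + a * b * (K ^ 2 * t + s) + K ^ 2 * b ^ 2 := by ring
    _ ≤ a ^ 2 * p ^ 2 + K ^ 2 * q ^ 2 + K ^ 2 * b ^ 2 := by
        rw [hp, hq]; nlinarith [mul_le_mul_of_nonneg_left hs (mul_nonneg ha hb)]
    _ ≤ (a * p + K * q + K * b) ^ 2 := by
        nlinarith [mul_nonneg (mul_nonneg ha hp0) (mul_nonneg hK hq0),
          mul_nonneg (mul_nonneg ha hp0) (mul_nonneg hK hb),
          mul_nonneg (mul_nonneg hK hq0) (mul_nonneg hK hb)]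

lemma sqrt_cross_term_le (α t L : ℝ) :
    √(2 * (5 / 4 * α) * (21 * L) * t) ≤ 8 * √(α * t * L) := by
  rw [show 2 * (5 / 4 * α) * (21 * L) * t = 105 / 2 * (α * t * L) by ring,
    Real.sqrt_mul (by norm_num)]
  gcongr
  exact Real.sqrt_le_iff.mpr ⟨by norm_num, by norm_num⟩

theorem stmt_11_general (α t L cmax : ℝ) (hα0 : 0 ≤ α)
    (ht : 0 ≤ t) (hL : 0 ≤ L) (hcmax : 0 ≤ cmax)
    (n : ℕ) (c : Fin n → ℝ) (hc0 : ∀ τ, 0 ≤ c τ) (hcb : ∀ τ, c τ ≤ cmax)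
    (hn : (n : ℝ) ≤ t) (N S : ℝ) (hS0 : 0 ≤ S)
    (hN : N ≤ (5 / 4) * α * t + 21 * L)
    (hS : S ≤ (5 / 4) * α * (∑ τ, (c τ) ^ 2) + 21 * cmax ^ 2 * L) :
    Real.sqrt (N * S) ≤
      (5 / 4) * α * Real.sqrt (t * ∑ τ, (c τ) ^ 2) +
        8 * cmax * Real.sqrt (α * t * L) + 21 * cmax * L := by
  set s := ∑ τ, c τ ^ 2
  have hs0 : 0 ≤ s := sum_nonneg fun τ _ ↦ sq_nonneg (c τ)
  have hs : s ≤ cmax ^ 2 * t := by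
    have hsn : s ≤ n * cmax ^ 2 := by simpa using sum_sq_le_card_mul_sq hc0 hcb
    linarith [mul_le_mul_of_nonneg_right hn (sq_nonneg cmax)]
  have hNS : N * S ≤ (5 / 4 * α * t + 21 * L) * (5 / 4 * α * s + cmax ^ 2 * (21 * L)) :=
    mul_le_mul hN (by linarith) hS0 (by positivity)
  calc √(N * S)
      ≤ 5 / 4 * α * √(t * s) + cmax * √(2 * (5 / 4 * α) * (21 * L) * t) + cmax * (21 * L) :=
        (Real.sqrt_le_sqrt hNS).trans
          (sqrt_mul_add_le (by positivity) (by positivity) ht hcmax hs0 hs)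
    _ ≤ 5 / 4 * α * √(t * s) + 8 * cmax * √(α * t * L) + 21 * cmax * L := by
        nlinarith [mul_le_mul_of_nonneg_left (sqrt_cross_term_le α t L) hcmax]

theorem stmt_11 (α t L cmax : ℝ) (hα0 : 0 ≤ α) (hα1 : α ≤ 1)
    (ht : 0 ≤ t) (hL : 0 ≤ L) (hcmax : 0 ≤ cmax)
    (n : ℕ) (c : Fin n → ℝ) (hc0 : ∀ τ, 0 ≤ c τ) (hcb : ∀ τ, c τ ≤ cmax)
    (hn : (n : ℝ) ≤ t) (N S : ℝ) (hN0 : 0 ≤ N) (hS0 : 0 ≤ S)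
    (hN : N ≤ (5 / 4) * α * t + 21 * L)
    (hS : S ≤ (5 / 4) * α * (∑ τ, (c τ) ^ 2) + 21 * cmax ^ 2 * L) :
    Real.sqrt (N * S) ≤
      (5 / 4) * α * Real.sqrt (t * ∑ τ, (c τ) ^ 2) +
        8 * cmax * Real.sqrt (α * t * L) + 21 * cmax * L :=
  stmt_11_general α t L cmax hα0 ht hL hcmax n c hc0 hcb hn N S hS0 hN hS
end
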